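/- Let R be a commutative ring with unit and let Y = (Y_1,\ldots,Y_m), X = (X_1,\ldots,X_r) be variables. Assume that h(Y,X) belongs to the subring of R[[Y,X]] generated by R[Y,X] and the series (1 - Y^a X^b)^{-1} with (a,b) \in \mathbb{N}^{m+r}\setminus\{0\}. If moreover h(Y,X) belongs to R[Y][[X]], then h(Y,X) belongs to the subring of R[[Y,X]] generated by R[Y,X] and the series (1 - Y^a X^b)^{-1} with (a,b) \in \mathbb{N}^{m+r}, b \ne 0. -/

import Mathlib

/-!
Clear denominators: `h · ∏ᵢ (1 - Y^{aᵢ} X^{bᵢ})` is a polynomial `P`. Then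
`q := h · ∏_{bᵢ ≠ 0} (1 - Y^{aᵢ} X^{bᵢ})` still lies in `R[Y][[X]]`, and
`q · ∏_{bᵢ = 0} (1 - Y^{aᵢ}) = P`. Multiplying an element of `R[Y][[X]]` by `1 - Y^a` with `a ≠ 0`
loses no `X`-exponent: were the `X^b`-part of the product zero, the coefficients of `Y^c X^b` in
the factor would be constant along `c + ℕ a`, hence zero, as only finitely many are nonzero.
So `q` has only the finitely many `X`-exponents of `P`, i.e. `q` is a polynomial, and
`h = q · ∏_{bᵢ ≠ 0} (1 - Y^{aᵢ} X^{bᵢ})⁻¹`.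
-/

noncomputable section
open scoped Classical

namespace DenefLoeser

/-- the monomial `Y^a X^b` in `R[[Y,X]] = R[[Y₁,…,Y_m,X₁,…,X_r]]`, the variables
`Y` being indexed by `Fin m` and the variables `X` by `Fin r` -/
def monomialYX (R : Type) [CommRing R] (m r : ℕ) (a : Fin m →₀ ℕ)
    (b : Fin r →₀ ℕ) : MvPowerSeries (Fin m ⊕ Fin r) R :=
  MvPowerSeries.monomial (R := R) (Finsupp.sumElim a b) 1

/-- `h ∈ R[Y][[X]]` : for each monomial `X^bX` in the `X` variables, only
finitely many monomials `Y^bY` have a nonzero coefficient in `h`. -/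
def MemPolyYPowerSeriesX (R : Type) [CommRing R] (m r : ℕ)
    (h : MvPowerSeries (Fin m ⊕ Fin r) R) : Prop :=
  ∀ bX : Fin r →₀ ℕ,
    {bY : Fin m →₀ ℕ |
      MvPowerSeries.coeff (R := R) (Finsupp.sumElim bY bX) h ≠ 0}.Finite

end DenefLoeser

namespace Subring

variable {A : Type*} [CommRing A]

theorem exists_mul_mem_of_mem_closure_union {T : Subring A} {P I G : Set A} (hP : P ⊆ T)
    (hG : G ⊆ T) (hI : ∀ x ∈ I, ∃ g ∈ G, x * g = 1) {h : A}
    (hh : h ∈ closure (P ∪ I)) : ∃ s ∈ Submonoid.closure G, h * s ∈ T := by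
  have hGT : ∀ s ∈ Submonoid.closure G, s ∈ T := fun s hs =>
    Submonoid.closure_le (S := T.toSubmonoid) |>.mpr hG hs
  induction hh using closure_induction with
  | mem x hx =>
    rcases hx with hx | hx
    · exact ⟨1, one_mem _, by simpa using hP hx⟩
    · obtain ⟨g, hg, hxg⟩ := hI x hx
      exact ⟨g, Submonoid.subset_closure hg, hxg ▸ one_mem T⟩
  | zero => exact ⟨1, one_mem _, by simp⟩
  | one => exact ⟨1, one_mem _, by simp⟩
  | add x y _ _ ihx ihy =>
    obtain ⟨s, hs, hxs⟩ := ihx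
    obtain ⟨t, ht, hyt⟩ := ihy
    refine ⟨s * t, mul_mem hs ht, ?_⟩
    rw [show (x + y) * (s * t) = x * s * t + y * t * s by ring]
    exact add_mem (mul_mem hxs (hGT t ht)) (mul_mem hyt (hGT s hs))
  | neg x _ ihx =>
    obtain ⟨s, hs, hxs⟩ := ihx
    exact ⟨s, hs, by simpa using neg_mem hxs⟩
  | mul x y _ _ ihx ihy =>
    obtain ⟨s, hs, hxs⟩ := ihx
    obtain ⟨t, ht, hyt⟩ := ihy
    exact ⟨s * t, mul_mem hs ht, by simpa [mul_mul_mul_comm] using mul_mem hxs hyt⟩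

theorem mem_of_mul_mem_of_mem_closure {T : Subring A} {G : Set A}
    (hG : ∀ g ∈ G, ∃ t ∈ T, t * g = 1) {s : A} (hs : s ∈ Submonoid.closure G) {h : A}
    (hh : h * s ∈ T) : h ∈ T := by
  have hinv : ∀ s ∈ Submonoid.closure G, ∃ t ∈ T, t * s = 1 := fun s hs => by
    induction hs using Submonoid.closure_induction with
    | mem g hg => exact hG g hg
    | one => exact ⟨1, one_mem T, one_mul 1⟩
    | mul x y _ _ ihx ihy =>
      obtain ⟨t, ht, htx⟩ := ihx
      obtain ⟨u, hu, huy⟩ := ihy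
      exact ⟨t * u, mul_mem ht hu, by rw [mul_mul_mul_comm, htx, huy, one_mul]⟩
  obtain ⟨t, ht, hts⟩ := hinv s hs
  simpa [mul_assoc, mul_comm s t, hts] using mul_mem hh ht

end Subring

namespace MvPowerSeries

variable {σ R : Type*} [CommRing R]

theorem closure_range_C_union_range_X :
    Subring.closure (Set.range (C (σ := σ) (R := R)) ∪ Set.range X) =
      (MvPolynomial.coeToMvPowerSeries.ringHom (σ := σ) (R := R)).range := by
  apply le_antisymm
  · rw [Subring.closure_le]
    rintro _ (⟨c, rfl⟩ | ⟨i, rfl⟩)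
    · exact ⟨MvPolynomial.C c, MvPolynomial.coe_C c⟩
    · exact ⟨MvPolynomial.X i, MvPolynomial.coe_X i⟩
  · rintro _ ⟨P, rfl⟩
    induction P using MvPolynomial.induction_on with
    | C c => exact Subring.subset_closure (Or.inl ⟨c, (MvPolynomial.coe_C c).symm⟩)
    | add p q hp hq => simpa using add_mem hp hq
    | mul_X p i hp =>
      simpa using mul_mem hp (Subring.subset_closure (Or.inr ⟨i, (MvPolynomial.coe_X i).symm⟩))

theorem mem_range_coe_of_finite_support {q : MvPowerSeries σ R}
    (hq : {e | coeff e q ≠ 0}.Finite) :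
    q ∈ (MvPolynomial.coeToMvPowerSeries.ringHom (σ := σ) (R := R)).range := by
  refine ⟨∑ e ∈ hq.toFinset, MvPolynomial.monomial e (coeff e q), ?_⟩
  ext e
  by_cases he : coeff e q = 0 <;>
    simp [coeff_monomial, he]

end MvPowerSeries

namespace Finsupp

variable {α β : Type*}

theorem sumElim_le_sumElim_iff (a c : α →₀ ℕ) (b d : β →₀ ℕ) :
    sumElim a b ≤ sumElim c d ↔ a ≤ c ∧ b ≤ d :=
  ⟨fun h => ⟨fun i => h (.inl i), fun j => h (.inr j)⟩,
    fun h x => x.rec (fun i => by simpa using h.1 i) (fun j => by simpa using h.2 j)⟩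

theorem sumElim_tsub_sumElim (a c : α →₀ ℕ) (b d : β →₀ ℕ) :
    sumElim a b - sumElim c d = sumElim (a - c) (b - d) := by
  ext (i | j) <;> simp

end Finsupp

namespace DenefLoeser

open MvPowerSeries (coeff)
open Finsupp (sumElim)

variable {R : Type} [CommRing R] {m r : ℕ}

def xSupport (q : MvPowerSeries (Fin m ⊕ Fin r) R) : Set (Fin r →₀ ℕ) :=
  {bX | ∃ bY, coeff (sumElim bY bX) q ≠ 0}

def oneSubMonomialYX (R : Type) [CommRing R] (m r : ℕ)
    (S : Set ((Fin m →₀ ℕ) × (Fin r →₀ ℕ))) : Set (MvPowerSeries (Fin m ⊕ Fin r) R) :=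
  (fun p => 1 - monomialYX R m r p.1 p.2) '' S

theorem isUnit_one_sub_monomialYX {a : Fin m →₀ ℕ} {b : Fin r →₀ ℕ} (hab : (a, b) ≠ 0) :
    IsUnit (1 - monomialYX R m r a b) := by
  have hab' : sumElim a b ≠ 0 :=
    Finsupp.sumFinsuppAddEquivProdFinsupp.symm.map_ne_zero_iff.2 hab
  rw [MvPowerSeries.isUnit_iff_constantCoeff, map_sub, map_one, monomialYX,
    ← MvPowerSeries.coeff_zero_eq_constantCoeff_apply, MvPowerSeries.coeff_monomial,
    if_neg hab'.symm, sub_zero]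
  exact isUnit_one

theorem coeff_mul_one_sub_monomialYX (q : MvPowerSeries (Fin m ⊕ Fin r) R)
    (a x : Fin m →₀ ℕ) (b y : Fin r →₀ ℕ) :
    coeff (sumElim x y) (q * (1 - monomialYX R m r a b)) =
      coeff (sumElim x y) q -
        if a ≤ x ∧ b ≤ y then coeff (sumElim (x - a) (y - b)) q else 0 := by
  simp only [mul_sub, mul_one, map_sub, monomialYX, MvPowerSeries.coeff_mul_monomial,
    Finsupp.sumElim_le_sumElim_iff, Finsupp.sumElim_tsub_sumElim]

theorem MemPolyYPowerSeriesX.mul_one_sub_monomialYX {q : MvPowerSeries (Fin m ⊕ Fin r) R}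
    (hq : MemPolyYPowerSeriesX R m r q) (a : Fin m →₀ ℕ) (b : Fin r →₀ ℕ) :
    MemPolyYPowerSeriesX R m r (q * (1 - monomialYX R m r a b)) := by
  intro bX
  refine ((hq bX).union ((hq (bX - b)).image (· + a))).subset fun bY hbY => ?_
  rw [Set.mem_ofPred_eq, coeff_mul_one_sub_monomialYX] at hbY
  by_cases h0 : coeff (sumElim bY bX) q = 0
  · rw [h0, zero_sub, neg_ne_zero] at hbY
    split_ifs at hbY with hle
    · exact Or.inr ⟨bY - a, hbY, tsub_add_cancel_of_le hle.1⟩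
    · exact absurd rfl hbY
  · exact Or.inl h0

theorem MemPolyYPowerSeriesX.mul_of_mem_closure {q : MvPowerSeries (Fin m ⊕ Fin r) R}
    (hq : MemPolyYPowerSeriesX R m r q) {S : Set ((Fin m →₀ ℕ) × (Fin r →₀ ℕ))}
    {s : MvPowerSeries (Fin m ⊕ Fin r) R} (hs : s ∈ Submonoid.closure (oneSubMonomialYX R m r S)) :
    MemPolyYPowerSeriesX R m r (q * s) := by
  induction hs using Submonoid.closure_induction generalizing q with
  | mem _ hx =>
    obtain ⟨p, -, rfl⟩ := hx
    exact hq.mul_one_sub_monomialYX p.1 p.2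
  | one => simpa using hq
  | mul x y _ _ ihx ihy => simpa [mul_assoc] using ihy (ihx hq)

theorem coeff_eq_zero_of_coeff_mul_one_sub_monomialYX_eq_zero {q : MvPowerSeries (Fin m ⊕ Fin r) R}
    {a : Fin m →₀ ℕ} (ha : a ≠ 0) {bX : Fin r →₀ ℕ}
    (hfin : {bY | coeff (sumElim bY bX) q ≠ 0}.Finite)
    (hz : ∀ bY, coeff (sumElim bY bX) (q * (1 - monomialYX R m r a 0)) = 0)
    (bY : Fin m →₀ ℕ) : coeff (sumElim bY bX) q = 0 := by
  have hshift : ∀ c, coeff (sumElim (c + a) bX) q =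
      coeff (sumElim c bX) q := fun c => by
    simpa [coeff_mul_one_sub_monomialYX, sub_eq_zero] using hz (c + a)
  have hiter : ∀ k : ℕ, coeff (sumElim (bY + k • a) bX) q =
      coeff (sumElim bY bX) q := by
    intro k
    induction k with
    | zero => simp
    | succ k ih => rw [succ_nsmul, ← add_assoc, hshift, ih]
  by_contra hne
  refine (Set.infinite_range_of_injective
    ((nsmul_left_strictMono (pos_iff_ne_zero.2 ha)).const_add bY).injective).mono ?_ hfin
  rintro _ ⟨k, rfl⟩
  exact (hiter k).trans_ne hne

theorem xSupport_subset_xSupport_mul_one_sub_monomialYX {q : MvPowerSeries (Fin m ⊕ Fin r) R}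
    (hq : MemPolyYPowerSeriesX R m r q) {a : Fin m →₀ ℕ} (ha : a ≠ 0) :
    xSupport q ⊆ xSupport (q * (1 - monomialYX R m r a 0)) := by
  rintro bX ⟨bY, hbY⟩
  by_contra hnot
  simp only [xSupport, Set.mem_ofPred_eq, not_exists, not_not] at hnot
  exact hbY (coeff_eq_zero_of_coeff_mul_one_sub_monomialYX_eq_zero ha (hq bX) hnot bY)

theorem xSupport_subset_xSupport_mul {q : MvPowerSeries (Fin m ⊕ Fin r) R}
    (hq : MemPolyYPowerSeriesX R m r q) {s : MvPowerSeries (Fin m ⊕ Fin r) R}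
    (hs : s ∈ Submonoid.closure (oneSubMonomialYX R m r {p | p ≠ 0 ∧ p.2 = 0})) :
    xSupport q ⊆ xSupport (q * s) := by
  induction hs using Submonoid.closure_induction generalizing q with
  | mem _ hx =>
    obtain ⟨⟨a, b⟩, ⟨hab, rfl : b = 0⟩, rfl⟩ := hx
    exact xSupport_subset_xSupport_mul_one_sub_monomialYX hq (by simpa using hab)
  | one => simp
  | mul x y hx _ ihx ihy =>
    simpa [mul_assoc] using (ihx hq).trans (ihy (hq.mul_of_mem_closure hx))

theorem xSupport_finite_of_mem_closure {q : MvPowerSeries (Fin m ⊕ Fin r) R}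
    (hq : q ∈ Subring.closure
      (Set.range (MvPowerSeries.C (σ := Fin m ⊕ Fin r) (R := R)) ∪ Set.range MvPowerSeries.X)) :
    (xSupport q).Finite := by
  rw [MvPowerSeries.closure_range_C_union_range_X] at hq
  obtain ⟨P, rfl⟩ := hq
  refine (P.support.finite_toSet.image fun e => (Finsupp.sumFinsuppEquivProdFinsupp e).2).subset ?_
  rintro bX ⟨bY, hbY⟩
  refine ⟨sumElim bY bX, by simpa using hbY, ?_⟩
  ext j
  simp

theorem mem_closure_of_xSupport_finite {q : MvPowerSeries (Fin m ⊕ Fin r) R}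
    (hq : MemPolyYPowerSeriesX R m r q) (hX : (xSupport q).Finite) :
    q ∈ Subring.closure
      (Set.range (MvPowerSeries.C (σ := Fin m ⊕ Fin r) (R := R)) ∪ Set.range MvPowerSeries.X) := by
  rw [MvPowerSeries.closure_range_C_union_range_X]
  refine MvPowerSeries.mem_range_coe_of_finite_support (((hX.biUnion fun bX _ =>
    (hq bX).prod (Set.finite_singleton bX)).image Finsupp.sumFinsuppEquivProdFinsupp.symm).subset ?_)
  intro e he
  obtain ⟨⟨bY, bX⟩, rfl⟩ := Finsupp.sumFinsuppEquivProdFinsupp.symm.surjective e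
  simp only [Finsupp.sumFinsuppEquivProdFinsupp_symm_apply, Set.mem_ofPred_eq] at he
  exact ⟨(bY, bX), Set.mem_biUnion ⟨bY, he⟩ ⟨he, rfl⟩, rfl⟩

theorem one_sub_monomialYX_mem_closure (a : Fin m →₀ ℕ) (b : Fin r →₀ ℕ) :
    1 - monomialYX R m r a b ∈ Subring.closure
      (Set.range (MvPowerSeries.C (σ := Fin m ⊕ Fin r) (R := R)) ∪ Set.range MvPowerSeries.X) := by
  rw [MvPowerSeries.closure_range_C_union_range_X]
  exact ⟨1 - MvPolynomial.monomial (sumElim a b) 1, by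
    rw [map_sub, map_one, MvPolynomial.coeToMvPowerSeries.ringHom_apply,
      MvPolynomial.coe_monomial, monomialYX]⟩

theorem exists_mul_eq_of_mem_closure_oneSubMonomialYX {s : MvPowerSeries (Fin m ⊕ Fin r) R}
    (hs : s ∈ Submonoid.closure (oneSubMonomialYX R m r {p | p ≠ 0})) :
    ∃ s₁ ∈ Submonoid.closure (oneSubMonomialYX R m r {p | p.2 ≠ 0}),
      ∃ s₀ ∈ Submonoid.closure (oneSubMonomialYX R m r {p | p ≠ 0 ∧ p.2 = 0}), s₁ * s₀ = s := by
  rw [← Submonoid.mem_sup, ← Submonoid.closure_union, oneSubMonomialYX, oneSubMonomialYX,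
    ← Set.image_union]
  refine Submonoid.closure_mono (Set.image_mono fun p hp => ?_) hs
  by_cases hp2 : p.2 = 0
  exacts [Or.inr ⟨hp, hp2⟩, Or.inl hp2]

/-- **Lemma 5.3 (Denef–Loeser).** Let `R` be a commutative ring with unit and
let `Y = (Y₁,…,Y_m)`, `X = (X₁,…,X_r)` be variables. Assume that `h(Y,X)`
belongs to the subring of `R[[Y,X]]` generated by `R[Y,X]` and the series
`(1 - Y^a X^b)⁻¹` with `(a,b) ∈ ℕ^{m+r} \ {0}`. If moreover `h(Y,X)` belongs to
`R[Y][[X]]`, then `h(Y,X)` belongs to the subring of `R[[Y,X]]` generated by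
`R[Y,X]` and the series `(1 - Y^a X^b)⁻¹` with `(a,b) ∈ ℕ^{m+r}`, `b ≠ 0`. -/
theorem rational_series_with_poly_coefficients (R : Type) [CommRing R]
    (m r : ℕ) (h : MvPowerSeries (Fin m ⊕ Fin r) R)
    (hgen : h ∈ Subring.closure
      ((Set.range (MvPowerSeries.C (σ := Fin m ⊕ Fin r) (R := R)) :
          Set (MvPowerSeries (Fin m ⊕ Fin r) R)) ∪
        Set.range (MvPowerSeries.X :
          Fin m ⊕ Fin r → MvPowerSeries (Fin m ⊕ Fin r) R) ∪
        {g : MvPowerSeries (Fin m ⊕ Fin r) R |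
          ∃ (a : Fin m →₀ ℕ) (b : Fin r →₀ ℕ), ¬(a = 0 ∧ b = 0) ∧
            g * (1 - monomialYX R m r a b) = 1}))
    (hpoly : MemPolyYPowerSeriesX R m r h) :
    h ∈ Subring.closure
      ((Set.range (MvPowerSeries.C (σ := Fin m ⊕ Fin r) (R := R)) :
          Set (MvPowerSeries (Fin m ⊕ Fin r) R)) ∪
        Set.range (MvPowerSeries.X :
          Fin m ⊕ Fin r → MvPowerSeries (Fin m ⊕ Fin r) R) ∪
        {g : MvPowerSeries (Fin m ⊕ Fin r) R |
          ∃ (a : Fin m →₀ ℕ) (b : Fin r →₀ ℕ), b ≠ 0 ∧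
            g * (1 - monomialYX R m r a b) = 1}) := by
  obtain ⟨s, hs, hhs⟩ := Subring.exists_mul_mem_of_mem_closure_union Subring.subset_closure
    (G := oneSubMonomialYX R m r {p | p ≠ 0})
    (Set.image_subset_iff.2 fun p _ => one_sub_monomialYX_mem_closure p.1 p.2)
    (by rintro g ⟨a, b, hab, hg⟩; exact ⟨_, ⟨(a, b), by simpa [Prod.ext_iff] using hab, rfl⟩, hg⟩)
    hgen
  obtain ⟨s₁, hs₁, s₀, hs₀, rfl⟩ := exists_mul_eq_of_mem_closure_oneSubMonomialYX hs
  have hq : MemPolyYPowerSeriesX R m r (h * s₁) := hpoly.mul_of_mem_closure hs₁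
  have hqX : (xSupport (h * s₁)).Finite :=
    (xSupport_finite_of_mem_closure (by rwa [← mul_assoc] at hhs)).subset
      (xSupport_subset_xSupport_mul hq hs₀)
  refine Subring.mem_of_mul_mem_of_mem_closure ?_ hs₁
    (Subring.closure_mono Set.subset_union_left (mem_closure_of_xSupport_finite hq hqX))
  rintro _ ⟨⟨a, b⟩, hb, rfl⟩
  obtain ⟨u, hu⟩ := isUnit_one_sub_monomialYX (R := R) fun hab => hb (congrArg Prod.snd hab)
  have hinv : ↑u⁻¹ * (1 - monomialYX R m r a b) = 1 := hu ▸ u.inv_mul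
  exact ⟨↑u⁻¹, Subring.subset_closure (Or.inr ⟨a, b, hb, hinv⟩), hinv⟩

end DenefLoeser
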